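/- arXiv:2210.01901 — 3 statements merged into one kernel-verified Lean document; each statement's English description precedes it below -/
import Mathlib

section
/- Let T > 0, λ₁ > 0, and α, κ₁ > 0 with 2α ≥ κ₁, and let φ : [0,T] → ℝ be nonnegative, bounded, and piecewise continuous (continuous off a finite set). Then there exists a unique continuous function r : [0,T] → ℝ satisfying the backward Riccati integral equation r(t) = −(2α−κ₁)/(2λ₁) + ∫_t^T ( r(s)² − φ(s)/λ₁ ) ds for all t ∈ [0,T]; equivalently, r is absolutely continuous, satisfies r(T) = −(2α−κ₁)/(2λ₁), and r′(t) = φ(t)/λ₁ − r(t)² for almost every t ∈ [0,T]. -/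
noncomputable section
open MeasureTheory Set Filter

lemma aux_integral_pow_sub (t b : ℝ) (n : ℕ) :
    (∫ s in t..b, (b - s) ^ n) = (b - t) ^ (n + 1) / (n + 1) := by
  have := intervalIntegral.integral_comp_sub_left (a := t) (b := b) (fun x => x ^ n) b
  rw [this, sub_self, integral_pow]
  simp

lemma aux_cont_primitive (T c : ℝ) (f : ℝ → ℝ)
    (hf : ∀ a b : ℝ, IntervalIntegrable f volume a b) :
    Continuous fun t : ℝ => c + ∫ s in t..T, f s := by
  have h2 : ∀ t : ℝ, (∫ s in t..T, f s)
      = (∫ s in (0:ℝ)..T, f s) - ∫ s in (0:ℝ)..t, f s := fun t =>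
    (intervalIntegral.integral_interval_sub_left (hf 0 T) (hf 0 t)).symm
  have heq : (fun t : ℝ => c + ∫ s in t..T, f s)
      = fun t : ℝ => c + ((∫ s in (0:ℝ)..T, f s) - ∫ s in (0:ℝ)..t, f s) :=
    funext fun t => by rw [h2 t]
  rw [heq]
  exact continuous_const.add (continuous_const.sub
    (intervalIntegral.continuous_primitive hf 0))

def riccatiOp (T c : ℝ) (hT : (0:ℝ) ≤ T) (G ρ : ℝ → ℝ) (hG : Continuous G)
    (hρ : ∀ a b : ℝ, IntervalIntegrable ρ volume a b) :
    C(Icc (0:ℝ) T, ℝ) → C(Icc (0:ℝ) T, ℝ) := fun u =>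
  ⟨fun t => c + ∫ s in (t:ℝ)..T, (G (IccExtend hT u s) - ρ s), by
    have hW : Continuous (IccExtend hT ⇑u) := u.continuous.Icc_extend'
    exact (aux_cont_primitive T c _ fun a b =>
      ((hG.comp hW).intervalIntegrable a b).sub (hρ a b)).comp continuous_subtype_val⟩

lemma riccatiOp_apply (T c : ℝ) (hT : (0:ℝ) ≤ T) (G ρ : ℝ → ℝ) (hG : Continuous G)
    (hρ : ∀ a b : ℝ, IntervalIntegrable ρ volume a b) (u : C(Icc (0:ℝ) T, ℝ))
    (t : Icc (0:ℝ) T) :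
    riccatiOp T c hT G ρ hG hρ u t
      = c + ∫ s in (t:ℝ)..T, (G (IccExtend hT u s) - ρ s) := rfl

lemma aux_fixed_point (T c K : ℝ) (hT : (0:ℝ) ≤ T) (hK : 0 ≤ K)
    (G : ℝ → ℝ) (hGlip : ∀ x y : ℝ, |G x - G y| ≤ K * |x - y|)
    (ρ : ℝ → ℝ) (hρ : ∀ a b : ℝ, IntervalIntegrable ρ volume a b) :
    ∃ r : ℝ → ℝ, Continuous r ∧
      ∀ t ∈ Icc (0:ℝ) T, r t = c + ∫ s in t..T, (G (r s) - ρ s) := by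
  have hG : Continuous G := by
    have : LipschitzWith ⟨K, hK⟩ G := by
      apply LipschitzWith.of_dist_le_mul
      intro x y
      exact (show dist (G x) (G y) ≤ K * dist x y by simpa [Real.dist_eq] using hGlip x y)
    exact this.continuous
  set Φ := riccatiOp T c hT G ρ hG hρ with hΦdef
  -- integrand integrability for continuous w
  have hint : ∀ w : ℝ → ℝ, Continuous w → ∀ a b : ℝ,
      IntervalIntegrable (fun s => G (w s) - ρ s) volume a b := fun w hw a b =>
    ((hG.comp hw).intervalIntegrable a b).sub (hρ a b)
  -- the key iterate estimate
  have iter : ∀ n : ℕ, ∀ u v : C(Icc (0:ℝ) T, ℝ), ∀ t : Icc (0:ℝ) T,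
      |Φ^[n] u t - Φ^[n] v t|
        ≤ (K * (T - t)) ^ n / (n.factorial : ℝ) * dist u v := by
    intro n
    induction n with
    | zero =>
      intro u v t
      simpa [Real.dist_eq] using ContinuousMap.dist_apply_le_dist (f := u) (g := v) t
    | succ n ih =>
      intro u v t
      set w := Φ^[n] u with hw
      set w' := Φ^[n] v with hw'
      have hWc : Continuous (IccExtend hT ⇑w) := w.continuous.Icc_extend'
      have hW'c : Continuous (IccExtend hT ⇑w') := w'.continuous.Icc_extend'
      have ht0 : (0:ℝ) ≤ (t:ℝ) := t.2.1
      have htT : (t:ℝ) ≤ T := t.2.2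
      have happ : Φ^[n+1] u t - Φ^[n+1] v t
          = ∫ s in (t:ℝ)..T, (G (IccExtend hT w s) - G (IccExtend hT w' s)) := by
        rw [Function.iterate_succ_apply', Function.iterate_succ_apply', ← hw, ← hw']
        rw [hΦdef, riccatiOp_apply, riccatiOp_apply]
        rw [add_sub_add_left_eq_sub, ← intervalIntegral.integral_sub
          (hint _ hWc (t:ℝ) T) (hint _ hW'c (t:ℝ) T)]
        congr 1
        funext s
        ring
      rw [happ]
      have step1 : |∫ s in (t:ℝ)..T, (G (IccExtend hT w s) - G (IccExtend hT w' s))|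
          ≤ ∫ s in (t:ℝ)..T, K * ((K * (T - s)) ^ n / (n.factorial : ℝ) * dist u v) := by
        refine le_trans (intervalIntegral.abs_integral_le_integral_abs htT) ?_
        refine intervalIntegral.integral_mono_on htT ?_ ?_ ?_
        · exact ((hG.comp hWc).sub (hG.comp hW'c)).abs.intervalIntegrable _ _
        · apply Continuous.intervalIntegrable; fun_prop
        · intro s hs
          have hsmem : s ∈ Icc (0:ℝ) T := ⟨le_trans ht0 hs.1, hs.2⟩
          rw [IccExtend_of_mem hT _ hsmem, IccExtend_of_mem hT _ hsmem]
          refine le_trans (hGlip _ _) ?_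
          refine mul_le_mul_of_nonneg_left ?_ hK
          simpa using ih u v ⟨s, hsmem⟩
      refine le_trans step1 (le_of_eq ?_)
      have hval : (∫ s in (t:ℝ)..T, K * ((K * (T - s)) ^ n / (n.factorial : ℝ) * dist u v))
          = (K * (K ^ n / (n.factorial : ℝ) * dist u v)) * ((T - (t:ℝ)) ^ (n+1) / (n+1)) := by
        have : (fun s => K * ((K * (T - s)) ^ n / (n.factorial : ℝ) * dist u v))
            = fun s => (K * (K ^ n / (n.factorial : ℝ) * dist u v)) * (T - s) ^ n := by
          funext s; rw [mul_pow]; ring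
        rw [this, intervalIntegral.integral_const_mul, aux_integral_pow_sub]
      rw [hval]
      have hnf : ((n + 1).factorial : ℝ) = (n + 1) * (n.factorial : ℝ) := by
        rw [Nat.factorial_succ]; push_cast; ring
      have h1 : (0:ℝ) < (n.factorial : ℝ) := by positivity
      have h2 : (0:ℝ) < (n:ℝ) + 1 := by positivity
      rw [hnf, mul_pow]
      field_simp
      ring
  -- an iterate of Φ is a contraction
  obtain ⟨n, hn⟩ : ∃ n : ℕ, (K * T) ^ n / (n.factorial : ℝ) < 1 :=
    ((FloorSemiring.tendsto_pow_div_factorial_atTop (K * T)).eventually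
      (gt_mem_nhds one_pos)).exists
  have hκ0 : 0 ≤ (K * T) ^ n / (n.factorial : ℝ) := by positivity
  have hdistle : ∀ u v : C(Icc (0:ℝ) T, ℝ),
      dist (Φ^[n] u) (Φ^[n] v) ≤ ((K * T) ^ n / (n.factorial : ℝ)) * dist u v := by
    intro u v
    rw [ContinuousMap.dist_le (by positivity)]
    intro t
    rw [Real.dist_eq]
    refine le_trans (iter n u v t) ?_
    have hb1 : 0 ≤ K * (T - (t:ℝ)) := mul_nonneg hK (sub_nonneg.2 t.2.2)
    have hb2 : K * (T - (t:ℝ)) ≤ K * T :=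
      mul_le_mul_of_nonneg_left (sub_le_self T t.2.1) hK
    have hp : (K * (T - (t:ℝ))) ^ n ≤ (K * T) ^ n := pow_le_pow_left₀ hb1 hb2 n
    gcongr
  have hcontr : ContractingWith ⟨_, hκ0⟩ (Φ^[n]) := by
    constructor
    · exact_mod_cast hn
    · exact LipschitzWith.of_dist_le_mul hdistle
  have hne : Nonempty C(Icc (0:ℝ) T, ℝ) := ⟨ContinuousMap.const _ 0⟩
  set x := ContractingWith.fixedPoint (Φ^[n]) hcontr with hxdef
  have hx : Function.IsFixedPt (Φ^[n]) x := hcontr.fixedPoint_isFixedPt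
  have hΦxfix : Function.IsFixedPt (Φ^[n]) (Φ x) := by
    show Φ^[n] (Φ x) = Φ x
    rw [← Function.iterate_succ_apply, Function.iterate_succ_apply', hx]
  have hfix : Φ x = x :=
    (hcontr.fixedPoint_unique hΦxfix).trans (hcontr.fixedPoint_unique hx).symm
  -- build the global solution
  have hXc : Continuous (IccExtend hT ⇑x) := x.continuous.Icc_extend'
  refine ⟨fun t : ℝ => c + ∫ s in t..T, (G (IccExtend hT x s) - ρ s),
    aux_cont_primitive T c _ (hint _ hXc), ?_⟩
  intro t ht
  have hr_eq_x : ∀ s : ℝ, ∀ hs : s ∈ Icc (0:ℝ) T,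
      c + (∫ σ in s..T, (G (IccExtend hT x σ) - ρ σ)) = x ⟨s, hs⟩ := by
    intro s hs
    have := DFunLike.congr_fun hfix (⟨s, hs⟩ : Icc (0:ℝ) T)
    simpa [hΦdef, riccatiOp_apply] using this
  have hcong : ∀ σ ∈ uIcc (t:ℝ) T,
      G (IccExtend hT x σ) - ρ σ
        = G (c + ∫ s in σ..T, (G (IccExtend hT x s) - ρ s)) - ρ σ := by
    intro σ hσ
    rw [uIcc_of_le ht.2] at hσ
    have hσmem : σ ∈ Icc (0:ℝ) T := ⟨le_trans ht.1 hσ.1, hσ.2⟩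
    rw [IccExtend_of_mem hT _ hσmem, hr_eq_x σ hσmem]
  beta_reduce
  rw [intervalIntegral.integral_congr hcong]
/-- Grönwall-type lemma: a nonnegative continuous function dominated by `K` times its
backward integral is zero. -/
lemma aux_gronwall (a b K : ℝ) (hab : a ≤ b) (hK : 0 ≤ K) (h : ℝ → ℝ)
    (hcont : ContinuousOn h (Icc a b)) (hnn : ∀ t ∈ Icc a b, 0 ≤ h t)
    (hineq : ∀ t ∈ Icc a b, h t ≤ K * ∫ s in t..b, h s) :
    ∀ t ∈ Icc a b, h t = 0 := by
  obtain ⟨C, hC⟩ := (isCompact_Icc (a := a) (b := b)).exists_bound_of_continuousOn hcont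
  set H : ℝ := max C 0 with hHdef
  have hH0 : 0 ≤ H := le_max_right _ _
  have hH : ∀ t ∈ Icc a b, h t ≤ H := fun t ht =>
    le_trans (le_abs_self _) (le_trans (hC t ht) (le_max_left _ _))
  have key : ∀ n : ℕ, ∀ t ∈ Icc a b, h t ≤ H * (K * (b - t)) ^ n / (n.factorial : ℝ) := by
    intro n
    induction n with
    | zero => intro t ht; simpa using hH t ht
    | succ n ih =>
      intro t ht
      have htb : t ≤ b := ht.2
      have hsub : Icc t b ⊆ Icc a b := Icc_subset_Icc ht.1 le_rfl
      have hint_h : IntervalIntegrable h volume t b := by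
        apply ContinuousOn.intervalIntegrable
        rw [uIcc_of_le htb]
        exact hcont.mono hsub
      have hint_poly : IntervalIntegrable
          (fun s => H * (K * (b - s)) ^ n / (n.factorial : ℝ)) volume t b := by
        apply Continuous.intervalIntegrable
        fun_prop
      have step1 : h t ≤ K * ∫ s in t..b, H * (K * (b - s)) ^ n / (n.factorial : ℝ) := by
        refine le_trans (hineq t ht) (mul_le_mul_of_nonneg_left ?_ hK)
        refine intervalIntegral.integral_mono_on htb hint_h hint_poly ?_
        intro x hx; exact ih x (hsub hx)
      have hval : (∫ s in t..b, H * (K * (b - s)) ^ n / (n.factorial : ℝ))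
          = (H * K ^ n / (n.factorial : ℝ)) * ((b - t) ^ (n + 1) / (n + 1)) := by
        have : (fun s => H * (K * (b - s)) ^ n / (n.factorial : ℝ))
            = fun s => (H * K ^ n / (n.factorial : ℝ)) * (b - s) ^ n := by
          funext s; rw [mul_pow]; ring
        rw [this, intervalIntegral.integral_const_mul, aux_integral_pow_sub]
      rw [hval] at step1
      refine le_trans step1 (le_of_eq ?_)
      have hnf : ((n + 1).factorial : ℝ) = (n + 1) * (n.factorial : ℝ) := by
        rw [Nat.factorial_succ]; push_cast; ring
      have h1 : (0:ℝ) < (n.factorial : ℝ) := by positivity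
      have h2 : (0:ℝ) < (n:ℝ) + 1 := by positivity
      rw [hnf, mul_pow]
      field_simp
      ring
  intro t ht
  have hle : h t ≤ 0 := by
    have htend : Tendsto (fun n : ℕ => H * (K * (b - t)) ^ n / (n.factorial : ℝ)) atTop (nhds 0) := by
      have := (FloorSemiring.tendsto_pow_div_factorial_atTop (K := ℝ) (K * (b - t))).const_mul H
      simpa [mul_div_assoc] using this
    exact ge_of_tendsto htend (Filter.Eventually.of_forall fun n => key n t ht)
  exact le_antisymm hle (hnn t ht)

/-- Existence and uniqueness of a continuous solution to the backward
Riccati integral equation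
`r(t) = −(2α−κ₁)/(2λ₁) + ∫_t^T ( r(s)² − φ(s)/λ₁ ) ds` on `[0,T]`. -/
theorem riccati_exists_unique
    (T lam1 kap1 alpha : ℝ)
    (hT : 0 < T) (hlam1 : 0 < lam1) (hkap1 : 0 < kap1) (halpha : 0 < alpha)
    (hak : kap1 ≤ 2 * alpha)
    (phi : ℝ → ℝ)
    (hphi_nonneg : ∀ t ∈ Icc (0:ℝ) T, 0 ≤ phi t)
    (hphi_bdd : ∃ C : ℝ, ∀ t ∈ Icc (0:ℝ) T, |phi t| ≤ C)
    (hphi_pc : ∃ F : Set ℝ, F.Finite ∧ ContinuousOn phi (Icc (0:ℝ) T \ F)) :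
    ∃ r : ℝ → ℝ, ContinuousOn r (Icc (0:ℝ) T) ∧
      (∀ t ∈ Icc (0:ℝ) T,
        r t = -((2*alpha - kap1)/(2*lam1)) + ∫ s in t..T, (r s ^ 2 - phi s / lam1)) ∧
      (∀ r' : ℝ → ℝ, ContinuousOn r' (Icc (0:ℝ) T) →
        (∀ t ∈ Icc (0:ℝ) T,
          r' t = -((2*alpha - kap1)/(2*lam1)) + ∫ s in t..T, (r' s ^ 2 - phi s / lam1)) →
        EqOn r' r (Icc (0:ℝ) T)) := by
  obtain ⟨C, hC⟩ := hphi_bdd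
  obtain ⟨Fs, hFs_fin, hphi_cont⟩ := hphi_pc
  set c : ℝ := (2*alpha - kap1)/(2*lam1) with hcdef
  have hc0 : 0 ≤ c := div_nonneg (by linarith) (by linarith)
  set C₀ : ℝ := max C 0 with hC0def
  have hC₀0 : 0 ≤ C₀ := le_max_right _ _
  set M : ℝ := c + C₀ * T / lam1 + 1 with hMdef
  have hM1 : 1 ≤ M := by
    have h1 : 0 ≤ C₀ * T / lam1 := by positivity
    rw [hMdef]; linarith
  have hM0 : 0 < M := lt_of_lt_of_le one_pos hM1
  -- the truncated quadratic nonlinearity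
  set g : ℝ → ℝ := fun x => (max (-M) (min M x))^2 with hgdef
  have hclamp_lip : ∀ x y : ℝ, |max (-M) (min M x) - max (-M) (min M y)| ≤ |x - y| := by
    intro x y
    refine le_trans (abs_max_sub_max_le_max _ _ _ _) ?_
    simp only [sub_self, abs_zero]
    refine max_le (by positivity) ?_
    refine le_trans (abs_min_sub_min_le_max _ _ _ _) ?_
    simp [abs_nonneg]
  have hclamp_bd : ∀ x : ℝ, |max (-M) (min M x)| ≤ M := by
    intro x
    rw [abs_le]
    exact ⟨le_max_left _ _, max_le (by linarith) (min_le_left _ _)⟩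
  have hg_lip : ∀ x y : ℝ, |g x - g y| ≤ (2*M) * |x - y| := by
    intro x y
    rw [hgdef]
    have h1 : (max (-M) (min M x))^2 - (max (-M) (min M y))^2
        = (max (-M) (min M x) + max (-M) (min M y))
          * (max (-M) (min M x) - max (-M) (min M y)) := by ring
    simp only []
    rw [h1, abs_mul]
    have h2 : |max (-M) (min M x) + max (-M) (min M y)| ≤ 2*M := by
      refine le_trans (abs_add_le _ _) ?_
      have := hclamp_bd x; have := hclamp_bd y; linarith
    exact mul_le_mul h2 (hclamp_lip x y) (abs_nonneg _) (by linarith)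
  have hg_nonneg : ∀ x : ℝ, 0 ≤ g x := fun x => sq_nonneg _
  have hg_eq : ∀ x : ℝ, -M ≤ x → x ≤ 0 → g x = x^2 := by
    intro x h1 h2
    rw [hgdef]
    simp only []
    rw [min_eq_right (le_trans h2 hM0.le), max_eq_right h1]
  have hg_le : ∀ x : ℝ, 0 ≤ x → g x ≤ M * x := by
    intro x hx
    rw [hgdef]
    simp only []
    rw [max_eq_right (le_trans (by linarith : -M ≤ (0:ℝ)) (le_min hM0.le hx))]
    rw [sq]
    exact mul_le_mul (min_le_left _ _) (min_le_right _ _) (le_min hM0.le hx) hM0.le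
  have hgcont : Continuous g := by rw [hgdef]; fun_prop
  -- the truncated source term
  set ψ : ℝ → ℝ := (Icc (0:ℝ) T).indicator phi with hψdef
  have hψ_nonneg : ∀ s : ℝ, 0 ≤ ψ s := by
    intro s
    rw [hψdef]
    by_cases hs : s ∈ Icc (0:ℝ) T
    · rw [indicator_of_mem hs]; exact hphi_nonneg s hs
    · rw [indicator_of_notMem hs]
  have hψ_le : ∀ s : ℝ, ψ s ≤ C₀ := by
    intro s
    rw [hψdef]
    by_cases hs : s ∈ Icc (0:ℝ) T
    · rw [indicator_of_mem hs]
      exact le_trans (le_abs_self _) (le_trans (hC s hs) (le_max_left _ _))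
    · rw [indicator_of_notMem hs]; exact hC₀0
  have hψ_eq : ∀ s ∈ Icc (0:ℝ) T, ψ s = phi s := fun s hs => indicator_of_mem hs phi
  have hψ_meas : AEStronglyMeasurable ψ volume := by
    have hFnull : volume Fs = 0 := hFs_fin.measure_zero _
    have hsm : MeasurableSet (Icc (0:ℝ) T \ Fs) :=
      measurableSet_Icc.diff hFs_fin.measurableSet
    have h1 : AEMeasurable phi (volume.restrict (Icc (0:ℝ) T \ Fs)) :=
      hphi_cont.aemeasurable hsm
    have h2 : volume.restrict (Icc (0:ℝ) T \ Fs) = volume.restrict (Icc (0:ℝ) T) := by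
      apply Measure.restrict_congr_set
      exact diff_ae_eq_self.2 (measure_mono_null inter_subset_right hFnull)
    rw [h2] at h1
    obtain ⟨φ', hφ'm, hφ'ae⟩ := h1
    refine ⟨(Icc (0:ℝ) T).indicator φ',
      (hφ'm.indicator measurableSet_Icc).stronglyMeasurable, ?_⟩
    have hae := (ae_restrict_iff' measurableSet_Icc).1 hφ'ae
    filter_upwards [hae] with x hx
    by_cases hmem : x ∈ Icc (0:ℝ) T
    · rw [hψdef]; rw [indicator_of_mem hmem, indicator_of_mem hmem]; exact hx hmem
    · rw [hψdef]; rw [indicator_of_notMem hmem, indicator_of_notMem hmem]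
  set ρ : ℝ → ℝ := fun s => ψ s / lam1 with hρdef
  have hρbd : ∀ s : ℝ, |ρ s| ≤ C₀ / lam1 := by
    intro s
    rw [hρdef]
    simp only []
    rw [abs_div, abs_of_pos hlam1, abs_of_nonneg (hψ_nonneg s)]
    gcongr
    exact hψ_le s
  have hρint : ∀ a b : ℝ, IntervalIntegrable ρ volume a b := by
    intro a b
    rw [intervalIntegrable_iff]
    refine Integrable.mono' (g := fun _ => C₀ / lam1) ?_ ?_ ?_
    · exact integrableOn_const measure_Ioc_lt_top.ne enorm_ne_top
    · have : AEStronglyMeasurable ρ volume := by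
        have h0 : ρ = fun s => ψ s * lam1⁻¹ := by
          funext s; rw [hρdef]; simp [div_eq_mul_inv]
        rw [h0]
        exact hψ_meas.mul_const _
      exact this.restrict
    · exact Eventually.of_forall fun x => by
        rw [Real.norm_eq_abs]; exact hρbd x
  obtain ⟨r, hrc, hreq⟩ := aux_fixed_point T (-c) (2*M) hT.le (by positivity) g hg_lip ρ hρint
  -- integrability of the truncated integrand
  have hint : ∀ a b : ℝ, IntervalIntegrable (fun s => g (r s) - ρ s) volume a b :=
    fun a b => (((hgcont.comp hrc)).intervalIntegrable a b).sub (hρint a b)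
  -- lower bound for r
  have hlow : ∀ t ∈ Icc (0:ℝ) T, -M ≤ r t := by
    intro t ht
    have hmono : -(C₀/lam1) * (T - t) ≤ ∫ s in t..T, (g (r s) - ρ s) := by
      have h1 := intervalIntegral.integral_mono_on (f := fun _ : ℝ => -(C₀/lam1))
        ht.2 (intervalIntegrable_const) (hint t T) (fun x hx => by
          have h2 : ρ x ≤ C₀ / lam1 := le_trans (le_abs_self _) (hρbd x)
          have h3 := hg_nonneg (r x)
          linarith)
      rw [intervalIntegral.integral_const, smul_eq_mul] at h1
      linarith [h1]
    have h4 : (C₀/lam1) * (T - t) ≤ (C₀/lam1) * T :=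
      mul_le_mul_of_nonneg_left (by linarith [ht.1]) (by positivity)
    have h5 : (C₀/lam1) * T = C₀ * T / lam1 := by ring
    have h6 := hreq t ht
    rw [hMdef]
    linarith [h6, hmono]
  -- r T = -c
  have hrT : r T = -c := by
    have := hreq T (right_mem_Icc.2 hT.le)
    simpa using this
  -- upper bound for r
  have hup : ∀ t ∈ Icc (0:ℝ) T, r t ≤ 0 := by
    by_contra hcon
    push_neg at hcon
    obtain ⟨t₀, ht₀, ht₀pos⟩ := hcon
    have ht₀T : t₀ < T := by
      rcases lt_or_eq_of_le ht₀.2 with h | h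
      · exact h
      · exfalso; rw [h, hrT] at ht₀pos; linarith
    set S : Set ℝ := Icc t₀ T ∩ r ⁻¹' (Iic 0) with hSdef
    have hSne : S.Nonempty := ⟨T, ⟨right_mem_Icc.2 ht₀T.le, by simp [hrT, hc0]⟩⟩
    have hSbdd : BddBelow S := ⟨t₀, fun x hx => hx.1.1⟩
    have hSclosed : IsClosed S := (isClosed_Icc).inter (isClosed_Iic.preimage hrc)
    set t₁ : ℝ := sInf S with ht₁def
    have ht₁S : t₁ ∈ S := hSclosed.csInf_mem hSne hSbdd
    have ht₁ge : t₀ ≤ t₁ := ht₁S.1.1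
    have ht₁T : t₁ ≤ T := ht₁S.1.2
    have hpos : ∀ t, t₀ ≤ t → t < t₁ → 0 < r t := by
      intro t h1 h2
      by_contra hr
      push_neg at hr
      have : t ∈ S := ⟨⟨h1, le_trans h2.le ht₁T⟩, hr⟩
      exact absurd (csInf_le hSbdd this) (not_le.2 h2)
    have ht₁gt : t₀ < t₁ := by
      rcases lt_or_eq_of_le ht₁ge with h | h
      · exact h
      · exfalso; rw [← h] at ht₁S; have := ht₁S.2; simp at this; linarith
    have hrt₁ : r t₁ = 0 := by
      refine le_antisymm ht₁S.2 ?_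
      have htend : Tendsto r (nhdsWithin t₁ (Ioo t₀ t₁)) (nhds (r t₁)) :=
        (hrc.tendsto t₁).mono_left nhdsWithin_le_nhds
      haveI hne : (nhdsWithin t₁ (Ioo t₀ t₁)).NeBot := by
        rw [← mem_closure_iff_nhdsWithin_neBot, closure_Ioo (ne_of_lt ht₁gt)]
        exact right_mem_Icc.2 ht₁gt.le
      exact ge_of_tendsto htend (eventually_mem_nhdsWithin.mono
        (fun x hx => (hpos x hx.1.le hx.2).le))
    -- Grönwall on [t₀, t₁]
    have hgron := aux_gronwall t₀ t₁ M ht₁gt.le hM0.le r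
      (hrc.continuousOn) (fun t ht => ?_) (fun t ht => ?_)
    · exact absurd (hgron t₀ (left_mem_Icc.2 ht₁gt.le)) (ne_of_gt ht₀pos)
    · -- nonnegativity on [t₀, t₁]
      rcases lt_or_eq_of_le ht.2 with h | h
      · exact (hpos t ht.1 h).le
      · rw [h, hrt₁]
    · -- the integral inequality on [t₀, t₁]
      have hsub : Icc t t₁ ⊆ Icc (0:ℝ) T :=
        Icc_subset_Icc (le_trans ht₀.1 ht.1) ht₁T
      have htmem : t ∈ Icc (0:ℝ) T := ⟨le_trans ht₀.1 ht.1, le_trans ht.2 ht₁T⟩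
      have ht₁mem : t₁ ∈ Icc (0:ℝ) T := ⟨le_trans ht₀.1 ht₁ge, ht₁T⟩
      have hsplit : r t - r t₁ = ∫ s in t..t₁, (g (r s) - ρ s) := by
        rw [hreq t htmem, hreq t₁ ht₁mem]
        rw [add_sub_add_left_eq_sub]
        rw [← intervalIntegral.integral_add_adjacent_intervals (hint t t₁) (hint t₁ T)]
        ring
      have hbound : (∫ s in t..t₁, (g (r s) - ρ s)) ≤ M * ∫ s in t..t₁, r s := by
        rw [← intervalIntegral.integral_const_mul]
        refine intervalIntegral.integral_mono_on ht.2 (hint t t₁) ?_ ?_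
        · exact (continuous_const.mul hrc).intervalIntegrable _ _
        · intro x hx
          have hx0 : 0 ≤ r x := by
            rcases lt_or_eq_of_le hx.2 with h | h
            · exact (hpos x (le_trans ht.1 hx.1) h).le
            · rw [h, hrt₁]
          have h7 : 0 ≤ ρ x := div_nonneg (hψ_nonneg x) hlam1.le
          have h8 := hg_le (r x) hx0
          linarith
      rw [hrt₁, sub_zero] at hsplit
      rw [hsplit]
      exact hbound
  -- the fixed point satisfies the original (untruncated) equation
  have hmain : ∀ t ∈ Icc (0:ℝ) T, r t = -c + ∫ s in t..T, (r s ^ 2 - phi s / lam1) := by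
    intro t ht
    rw [hreq t ht]
    congr 1
    apply intervalIntegral.integral_congr
    intro s hs
    rw [uIcc_of_le ht.2] at hs
    have hsmem : s ∈ Icc (0:ℝ) T := ⟨le_trans ht.1 hs.1, hs.2⟩
    have h1 : g (r s) = r s ^ 2 := hg_eq _ (hlow s hsmem) (hup s hsmem)
    have h2 : ρ s = phi s / lam1 := by
      show ψ s / lam1 = phi s / lam1
      rw [hψ_eq s hsmem]
    show g (r s) - ρ s = r s ^ 2 - phi s / lam1
    rw [h1, h2]
  refine ⟨r, hrc.continuousOn, hmain, ?_⟩
  -- uniqueness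
  intro r' hr'c hr'eq
  obtain ⟨B, hB⟩ := (isCompact_Icc (a := (0:ℝ)) (b := T)).exists_bound_of_continuousOn hr'c
  set B₀ : ℝ := max B 0 with hB₀def
  have hB₀nn : 0 ≤ B₀ := le_max_right _ _
  have hB₀ : ∀ t ∈ Icc (0:ℝ) T, |r' t| ≤ B₀ := fun t ht =>
    le_trans (hB t ht) (le_max_left _ _)
  have hrbd : ∀ t ∈ Icc (0:ℝ) T, |r t| ≤ M := fun t ht =>
    abs_le.2 ⟨hlow t ht, le_trans (hup t ht) hM0.le⟩
  set K : ℝ := B₀ + M with hKdef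
  have hK0 : 0 ≤ K := add_nonneg hB₀nn hM0.le
  have hφint : ∀ t ∈ Icc (0:ℝ) T, IntervalIntegrable (fun s => phi s / lam1) volume t T := by
    intro t ht
    rw [intervalIntegrable_iff]
    refine (intervalIntegrable_iff.1 (hρint t T)).congr_fun ?_ measurableSet_uIoc
    intro s hs
    rw [uIoc_of_le ht.2] at hs
    have hsmem : s ∈ Icc (0:ℝ) T := ⟨le_trans ht.1 hs.1.le, hs.2⟩
    show ψ s / lam1 = phi s / lam1
    rw [hψ_eq s hsmem]
  have hineq : ∀ t ∈ Icc (0:ℝ) T, |r' t - r t| ≤ K * ∫ s in t..T, |r' s - r s| := by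
    intro t ht
    have hsub : Icc t T ⊆ Icc (0:ℝ) T := Icc_subset_Icc ht.1 le_rfl
    have hint1 : IntervalIntegrable (fun s => r' s ^ 2 - phi s / lam1) volume t T := by
      refine IntervalIntegrable.sub ?_ (hφint t ht)
      apply ContinuousOn.intervalIntegrable
      rw [uIcc_of_le ht.2]
      exact (hr'c.mono hsub).pow 2
    have hint2 : IntervalIntegrable (fun s => r s ^ 2 - phi s / lam1) volume t T :=
      IntervalIntegrable.sub ((hrc.pow 2).intervalIntegrable _ _) (hφint t ht)
    have hdiff : r' t - r t = ∫ s in t..T, (r' s ^ 2 - r s ^ 2) := by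
      rw [hr'eq t ht, hmain t ht, add_sub_add_left_eq_sub,
        ← intervalIntegral.integral_sub hint1 hint2]
      congr 1
      funext s
      ring
    rw [hdiff]
    refine le_trans (intervalIntegral.abs_integral_le_integral_abs ht.2) ?_
    rw [← intervalIntegral.integral_const_mul]
    refine intervalIntegral.integral_mono_on ht.2 ?_ ?_ ?_
    · apply ContinuousOn.intervalIntegrable
      rw [uIcc_of_le ht.2]
      exact (((hr'c.mono hsub).pow 2).sub ((hrc.pow 2).continuousOn)).abs
    · apply ContinuousOn.intervalIntegrable
      rw [uIcc_of_le ht.2]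
      exact continuousOn_const.mul ((hr'c.mono hsub).sub hrc.continuousOn).abs
    · intro x hx
      have hxmem : x ∈ Icc (0:ℝ) T := hsub hx
      have e1 : r' x ^ 2 - r x ^ 2 = (r' x + r x) * (r' x - r x) := by ring
      rw [e1, abs_mul]
      refine mul_le_mul ?_ le_rfl (abs_nonneg _) hK0
      refine le_trans (abs_add_le _ _) ?_
      exact add_le_add (hB₀ x hxmem) (hrbd x hxmem)
  have hgron := aux_gronwall 0 T K hT.le hK0 (fun t => |r' t - r t|)
    (hr'c.sub hrc.continuousOn).abs (fun t _ => abs_nonneg _) hineq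
  intro t ht
  exact sub_eq_zero.1 (abs_eq_zero.1 (hgron t ht))
end
end

section
/- For every ψ ∈ L²([0,T]), the function t ↦ (𝖦ψ)(t) is continuously differentiable on [0,T], satisfies (𝖦ψ)(0) = 0, and satisfies the differential equation d/dt (𝖦ψ)(t) = r¹(t) (𝖦ψ)(t) + (K₁*ψ)(t) for all t ∈ [0,T]. -/
noncomputable section
open MeasureTheory Set Filter
open scoped RealInnerProductSpace ENNReal NNReal

/-- The Lebesgue measure restricted to the interval `[0,T]`. -/
noncomputable def muT (T : ℝ) : MeasureTheory.Measure ℝ :=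
  MeasureTheory.volume.restrict (Set.Icc 0 T)

/-- The real Hilbert space `L²([0,T])`. -/
abbrev HT (T : ℝ) : Type := MeasureTheory.Lp ℝ 2 (muT T)

/-- For every `ψ ∈ L²([0,T])`, the function `t ↦ (𝖦ψ)(t)` is
continuously differentiable on `[0,T]`, vanishes at `0`, and satisfies
`d/dt (𝖦ψ)(t) = r¹(t) (𝖦ψ)(t) + (K₁*ψ)(t)` on `[0,T]`. -/
theorem operator_G_ode
    (T lam1 kap1 alpha : ℝ)
    (hT : 0 < T) (hlam1 : 0 < lam1) (hkap1 : 0 < kap1) (halpha : 0 < alpha)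
    (hak : kap1 ≤ 2 * alpha)
    (phi : ℝ → ℝ)
    (hphi_nonneg : ∀ t ∈ Icc (0:ℝ) T, 0 ≤ phi t)
    (hphi_bdd : ∃ C : ℝ, ∀ t ∈ Icc (0:ℝ) T, |phi t| ≤ C)
    (hphi_pc : ∃ F : Set ℝ, F.Finite ∧ ContinuousOn phi (Icc (0:ℝ) T \ F))
    (r1 : ℝ → ℝ)
    (hr1_cont : ContinuousOn r1 (Icc (0:ℝ) T))
    (hr1_eq : ∀ t ∈ Icc (0:ℝ) T,
      r1 t = -((2*alpha - kap1)/(2*lam1)) + ∫ s in t..T, (r1 s ^ 2 - phi s / lam1))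
    (xip xim : ℝ → ℝ)
    (hxip : ∀ t, xip t = Real.exp (∫ s in (0:ℝ)..t, r1 s))
    (hxim : ∀ t, xim t = Real.exp (-∫ s in (0:ℝ)..t, r1 s))
    (K : ℝ → ℝ → ℝ) (hK : ∀ t s, K t s = xim t * xip s)
    (G : ℝ → ℝ → ℝ) (hG : ∀ t s, G t s = ∫ u in (0:ℝ)..(min t s), K u t * K u s)
    :
    ∀ ψ : ℝ → ℝ, MeasureTheory.MemLp ψ 2 (muT T) →
      (∫ s in Icc (0:ℝ) T, G 0 s * ψ s) = 0 ∧
      (∀ t ∈ Icc (0:ℝ) T,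
        HasDerivWithinAt (fun u => ∫ s in Icc (0:ℝ) T, G u s * ψ s)
          (r1 t * (∫ s in Icc (0:ℝ) T, G t s * ψ s) + ∫ s in Icc t T, K t s * ψ s)
          (Icc (0:ℝ) T) t) ∧
      ContinuousOn
        (fun t => r1 t * (∫ s in Icc (0:ℝ) T, G t s * ψ s) + ∫ s in Icc t T, K t s * ψ s)
        (Icc (0:ℝ) T) := by
  intro ψ hψ
  classical
  have h0T : (0:ℝ) ∈ Icc (0:ℝ) T := ⟨le_rfl, hT.le⟩
  haveI hfin : IsFiniteMeasure (volume.restrict (Icc (0:ℝ) T)) :=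
    ⟨by rw [Measure.restrict_apply_univ]; exact measure_Icc_lt_top⟩
  have hψ_int : IntegrableOn ψ (Icc (0:ℝ) T) := by
    have hfin' : IsFiniteMeasure (muT T) := by rw [muT]; exact hfin
    have h2 := hψ.integrable (by norm_num : (1:ℝ≥0∞) ≤ 2)
    rw [muT] at h2
    exact h2
  -- the primitive `a` of `r1`
  set a : ℝ → ℝ := fun t => ∫ s in (0:ℝ)..t, r1 s with ha_def
  have hr1_intu : IntegrableOn r1 (uIcc (0:ℝ) T) := by
    rw [uIcc_of_le hT.le]; exact hr1_cont.integrableOn_Icc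
  have ha_cont : ContinuousOn a (Icc (0:ℝ) T) := by
    have := intervalIntegral.continuousOn_primitive_interval (a := (0:ℝ)) (b := T)
      (μ := volume) hr1_intu
    rw [uIcc_of_le hT.le] at this
    exact this.congr (fun t _ => by simp only [ha_def])
  have ha_deriv : ∀ t ∈ Icc (0:ℝ) T, HasDerivWithinAt a (r1 t) (Icc (0:ℝ) T) t := by
    intro t ht
    haveI : Fact (t ∈ Icc (0:ℝ) T) := ⟨ht⟩
    have hprim : HasDerivWithinAt (fun u => ∫ x in (0:ℝ)..u, r1 x) (r1 t) (Icc (0:ℝ) T) t :=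
      intervalIntegral.integral_hasDerivWithinAt_right
        ((hr1_cont.mono (by rw [uIcc_of_le ht.1]; exact Icc_subset_Icc le_rfl ht.2)).intervalIntegrable)
        ⟨Icc (0:ℝ) T, self_mem_nhdsWithin, hr1_cont.aestronglyMeasurable measurableSet_Icc⟩
        (hr1_cont.continuousWithinAt ht)
    exact hprim
  have hxip_eq : xip = fun t => Real.exp (a t) := by
    funext t; rw [hxip t]
  have hxim_eq : xim = fun t => Real.exp (-a t) := by
    funext t; rw [hxim t]
  have hxip_cont : ContinuousOn xip (Icc (0:ℝ) T) := by
    rw [hxip_eq]; exact Real.continuous_exp.comp_continuousOn ha_cont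
  have hxim_cont : ContinuousOn xim (Icc (0:ℝ) T) := by
    rw [hxim_eq]; exact Real.continuous_exp.comp_continuousOn ha_cont.neg
  have hxipm : ∀ t, xip t * xim t = 1 := by
    intro t; rw [hxip, hxim, ← Real.exp_add]; simp
  have hxip_deriv : ∀ t ∈ Icc (0:ℝ) T, HasDerivWithinAt xip (r1 t * xip t) (Icc (0:ℝ) T) t := by
    intro t ht
    rw [hxip_eq]
    simpa [mul_comm] using (ha_deriv t ht).exp
  -- key auxiliary functions
  set I : ℝ → ℝ := fun t => ∫ u in (0:ℝ)..t, (xim u)^2 with hI_def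
  set h : ℝ → ℝ := fun s => xip s * ψ s with hh_def
  set H : ℝ → ℝ := fun u => ∫ s in Icc u T, h s with hH_def
  -- integrability of h
  obtain ⟨Cp, hCp⟩ :=
    (isCompact_Icc : IsCompact (Icc (0:ℝ) T)).exists_bound_of_continuousOn hxip_cont
  have hh_int : IntegrableOn h (Icc (0:ℝ) T) := by
    apply Integrable.bdd_mul (c := Cp) hψ_int (hxip_cont.aestronglyMeasurable measurableSet_Icc)
    filter_upwards [ae_restrict_mem measurableSet_Icc] with x hx
    exact hCp x hx
  obtain ⟨Cm, hCm⟩ :=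
    (isCompact_Icc : IsCompact (Icc (0:ℝ) T)).exists_bound_of_continuousOn (hxim_cont.pow 2)
  have hCm0 : 0 ≤ Cm := le_trans (norm_nonneg _) (hCm 0 h0T)
  have hh_intu : IntegrableOn h (uIcc (0:ℝ) T) := by rwa [uIcc_of_le hT.le]
  have hh_ii : ∀ u ∈ Icc (0:ℝ) T, IntervalIntegrable h volume 0 u := by
    intro u hu
    have : IntegrableOn h (uIcc (0:ℝ) u) := by
      rw [uIcc_of_le hu.1]
      exact hh_int.mono_set (Icc_subset_Icc le_rfl hu.2)
    exact this.intervalIntegrable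
  -- representation and continuity of H
  have hHrep : ∀ u ∈ Icc (0:ℝ) T, H u = (∫ s in (0:ℝ)..T, h s) - ∫ s in (0:ℝ)..u, h s := by
    intro u hu
    have h1 : H u = ∫ s in u..T, h s := by
      rw [intervalIntegral.integral_of_le hu.2]
      simp only [hH_def]
      exact integral_Icc_eq_integral_Ioc
    rw [h1, ← intervalIntegral.integral_interval_sub_left
      hh_intu.intervalIntegrable (hh_ii u hu)]
  have hH_cont : ContinuousOn H (Icc (0:ℝ) T) := by
    have hp : ContinuousOn (fun u => ∫ s in (0:ℝ)..u, h s) (Icc (0:ℝ) T) := by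
      have := intervalIntegral.continuousOn_primitive_interval (a := (0:ℝ)) (b := T)
        (μ := volume) hh_intu
      rwa [uIcc_of_le hT.le] at this
    exact (continuousOn_const.sub hp).congr hHrep
  set g : ℝ → ℝ := fun u => (xim u)^2 * H u with hg_def
  have hg_cont : ContinuousOn g (Icc (0:ℝ) T) := (hxim_cont.pow 2).mul hH_cont
  have hg_ii : ∀ t ∈ Icc (0:ℝ) T, IntervalIntegrable g volume 0 t := by
    intro t ht
    exact (hg_cont.mono
      (by rw [uIcc_of_le ht.1]; exact Icc_subset_Icc le_rfl ht.2)).intervalIntegrable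
  -- rewrite of G
  have hGts : ∀ t s, G t s = I (min t s) * (xip t * xip s) := by
    intro t s
    rw [hG]
    have hKK : ∀ u, K u t * K u s = (xim u)^2 * (xip t * xip s) := by
      intro u; rw [hK, hK]; ring
    simp_rw [hKK]
    rw [intervalIntegral.integral_mul_const]
  set B : ℝ → ℝ := fun t => ∫ s in Icc (0:ℝ) T, I (min t s) * h s with hB_def
  have hFB : ∀ t, (∫ s in Icc (0:ℝ) T, G t s * ψ s) = xip t * B t := by
    intro t
    have heq : ∀ s, G t s * ψ s = xip t * (I (min t s) * h s) := by
      intro s; rw [hGts]; simp only [hh_def]; ring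
    simp_rw [heq]
    simp only [hB_def]
    exact integral_const_mul _ _
  have hKint : ∀ t, (∫ s in Icc t T, K t s * ψ s) = xim t * H t := by
    intro t
    have heq : ∀ s, K t s * ψ s = xim t * h s := by
      intro s; rw [hK]; simp only [hh_def]; ring
    simp_rw [heq]
    simp only [hH_def]
    exact integral_const_mul _ _
  -- Fubini representation of B
  have hBrep : ∀ t ∈ Icc (0:ℝ) T, B t = ∫ u in (0:ℝ)..t, g u := by
    intro t ht
    set f2 : ℝ → ℝ → ℝ := fun s u => (if u ≤ t ∧ u ≤ s then (xim u)^2 else 0) * h s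
      with hf2_def
    have hximae : AEStronglyMeasurable (fun u => (xim u)^2) (volume.restrict (Icc (0:ℝ) T)) :=
      (hxim_cont.pow 2).aestronglyMeasurable measurableSet_Icc
    have hSmeas : MeasurableSet {p : ℝ × ℝ | p.2 ≤ t ∧ p.2 ≤ p.1} :=
      (measurableSet_le measurable_snd measurable_const).inter
        (measurableSet_le measurable_snd measurable_fst)
    have hf2meas : AEStronglyMeasurable (Function.uncurry f2)
        ((volume.restrict (Icc (0:ℝ) T)).prod (volume.restrict (Icc (0:ℝ) T))) := by
      have h1 : AEStronglyMeasurable (fun p : ℝ × ℝ => (xim p.2)^2)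
          ((volume.restrict (Icc (0:ℝ) T)).prod (volume.restrict (Icc (0:ℝ) T))) :=
        (hximae.aemeasurable.comp_snd).aestronglyMeasurable
      have h2 : AEStronglyMeasurable (fun p : ℝ × ℝ => h p.1)
          ((volume.restrict (Icc (0:ℝ) T)).prod (volume.restrict (Icc (0:ℝ) T))) :=
        (hh_int.aestronglyMeasurable.aemeasurable.comp_fst).aestronglyMeasurable
      have h3 := (h1.indicator hSmeas).mul h2
      refine h3.congr (Eventually.of_forall ?_)
      rintro ⟨s, u⟩
      simp only [Function.uncurry_apply_pair, Pi.mul_apply, Set.indicator_apply,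
        Set.mem_setOf_eq, hf2_def]
    have hf2int : Integrable (Function.uncurry f2)
        ((volume.restrict (Icc (0:ℝ) T)).prod (volume.restrict (Icc (0:ℝ) T))) := by
      have hbd : Integrable (fun p : ℝ × ℝ => Cm * |h p.1|)
          ((volume.restrict (Icc (0:ℝ) T)).prod (volume.restrict (Icc (0:ℝ) T))) := by
        have := Integrable.mul_prod (hh_int.abs.const_mul Cm)
          (integrable_const (μ := volume.restrict (Icc (0:ℝ) T)) (1:ℝ))
        simpa using this
      refine hbd.mono' hf2meas ?_
      have hmem : ∀ᵐ p : ℝ × ℝ ∂((volume.restrict (Icc (0:ℝ) T)).prod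
          (volume.restrict (Icc (0:ℝ) T))), p ∈ (Icc (0:ℝ) T) ×ˢ (Icc (0:ℝ) T) := by
        rw [Measure.prod_restrict]
        exact ae_restrict_mem (measurableSet_Icc.prod measurableSet_Icc)
      filter_upwards [hmem] with p hp
      rcases p with ⟨s, u⟩
      simp only [Function.uncurry, hf2_def]
      rw [norm_mul]
      by_cases hc : u ≤ t ∧ u ≤ s
      · rw [if_pos hc]
        have hb : ‖(xim u)^2‖ ≤ Cm := hCm u hp.2
        calc ‖(xim u)^2‖ * ‖h s‖ ≤ Cm * ‖h s‖ :=
              mul_le_mul_of_nonneg_right hb (norm_nonneg _)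
          _ = Cm * |h s| := by rw [Real.norm_eq_abs]
      · rw [if_neg hc]
        simp only [norm_zero, zero_mul]
        positivity
    have step1 : ∀ s ∈ Icc (0:ℝ) T,
        I (min t s) * h s = ∫ u in Icc (0:ℝ) T, f2 s u := by
      intro s hs
      have hmle : min t s ≤ T := le_trans (min_le_left _ _) ht.2
      have hm0 : (0:ℝ) ≤ min t s := le_min ht.1 hs.1
      have hind : (fun u => if u ≤ t ∧ u ≤ s then (xim u)^2 else 0)
          = (Iic (min t s)).indicator (fun u => (xim u)^2) := by
        funext u; simp [Set.indicator_apply, le_min_iff]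
      have hseteq : Icc (0:ℝ) T ∩ Iic (min t s) = Icc 0 (min t s) := by
        ext u
        simp only [mem_inter_iff, mem_Icc, mem_Iic]
        exact ⟨fun hu => ⟨hu.1.1, hu.2⟩, fun hu => ⟨⟨hu.1, hu.2.trans hmle⟩, hu.2⟩⟩
      simp only [hf2_def]
      rw [integral_mul_const, hind, setIntegral_indicator measurableSet_Iic, hseteq,
        integral_Icc_eq_integral_Ioc, ← intervalIntegral.integral_of_le hm0]
    have hswap : (∫ s in Icc (0:ℝ) T, ∫ u in Icc (0:ℝ) T, f2 s u)
        = ∫ u in Icc (0:ℝ) T, ∫ s in Icc (0:ℝ) T, f2 s u :=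
      integral_integral_swap hf2int
    have step2 : ∀ u ∈ Icc (0:ℝ) T,
        (∫ s in Icc (0:ℝ) T, f2 s u) = if u ≤ t then g u else 0 := by
      intro u hu
      by_cases hut : u ≤ t
      · rw [if_pos hut]
        have hind2 : (fun s => f2 s u) = (Ici u).indicator (fun s => (xim u)^2 * h s) := by
          funext s
          simp only [hf2_def, Set.indicator_apply, mem_Ici]
          by_cases hus : u ≤ s
          · simp [hus, hut]
          · simp [hus]
        have hseteq2 : Icc (0:ℝ) T ∩ Ici u = Icc u T := by
          ext s; simp only [mem_inter_iff, mem_Icc, mem_Ici]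
          exact ⟨fun hh => ⟨hh.2, hh.1.2⟩, fun hh => ⟨⟨hu.1.trans hh.1, hh.2⟩, hh.1⟩⟩
        rw [hind2, setIntegral_indicator measurableSet_Ici, hseteq2, integral_const_mul]
      · rw [if_neg hut]
        have hz : (fun s => f2 s u) = fun _ => (0:ℝ) := by
          funext s; simp only [hf2_def]
          rw [if_neg (by tauto), zero_mul]
        rw [hz, integral_zero]
    have step3 : (∫ u in Icc (0:ℝ) T, if u ≤ t then g u else 0) = ∫ u in (0:ℝ)..t, g u := by
      have hind3 : (fun u => if u ≤ t then g u else 0) = (Iic t).indicator g := by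
        funext u; simp [Set.indicator_apply]
      have hseteq3 : Icc (0:ℝ) T ∩ Iic t = Icc 0 t := by
        ext u; simp only [mem_inter_iff, mem_Icc, mem_Iic]
        exact ⟨fun hh => ⟨hh.1.1, hh.2⟩, fun hh => ⟨⟨hh.1, hh.2.trans ht.2⟩, hh.2⟩⟩
      rw [hind3, setIntegral_indicator measurableSet_Iic, hseteq3,
        integral_Icc_eq_integral_Ioc, ← intervalIntegral.integral_of_le ht.1]
    calc B t = ∫ s in Icc (0:ℝ) T, ∫ u in Icc (0:ℝ) T, f2 s u := by
          simp only [hB_def]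
          exact setIntegral_congr_fun measurableSet_Icc step1
      _ = ∫ u in Icc (0:ℝ) T, ∫ s in Icc (0:ℝ) T, f2 s u := hswap
      _ = ∫ u in Icc (0:ℝ) T, if u ≤ t then g u else 0 :=
          setIntegral_congr_fun measurableSet_Icc step2
      _ = ∫ u in (0:ℝ)..t, g u := step3
  -- the derivative statement
  have hderiv : ∀ t ∈ Icc (0:ℝ) T,
      HasDerivWithinAt (fun u => ∫ s in Icc (0:ℝ) T, G u s * ψ s)
        (r1 t * (∫ s in Icc (0:ℝ) T, G t s * ψ s) + ∫ s in Icc t T, K t s * ψ s)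
        (Icc (0:ℝ) T) t := by
    intro t ht
    haveI : Fact (t ∈ Icc (0:ℝ) T) := ⟨ht⟩
    have hBd : HasDerivWithinAt B (g t) (Icc (0:ℝ) T) t := by
      have hprim : HasDerivWithinAt (fun u => ∫ x in (0:ℝ)..u, g x) (g t) (Icc (0:ℝ) T) t :=
        intervalIntegral.integral_hasDerivWithinAt_right (hg_ii t ht)
          ⟨Icc (0:ℝ) T, self_mem_nhdsWithin, hg_cont.aestronglyMeasurable measurableSet_Icc⟩
          (hg_cont.continuousWithinAt ht)
      exact hprim.congr hBrep (hBrep t ht)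
    have hFd : HasDerivWithinAt (fun u => ∫ s in Icc (0:ℝ) T, G u s * ψ s)
        (r1 t * xip t * B t + xip t * g t) (Icc (0:ℝ) T) t := by
      have hmul := (hxip_deriv t ht).mul hBd
      exact hmul.congr (fun y _ => hFB y) (hFB t)
    have key : r1 t * xip t * B t + xip t * g t
        = r1 t * (∫ s in Icc (0:ℝ) T, G t s * ψ s) + ∫ s in Icc t T, K t s * ψ s := by
      rw [hFB t, hKint t]
      have hx1 : xip t * xim t = 1 := hxipm t
      simp only [hg_def]
      linear_combination (xim t * H t) * hx1
    rw [← key]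
    exact hFd
  have hF_cont : ContinuousOn (fun t => ∫ s in Icc (0:ℝ) T, G t s * ψ s) (Icc (0:ℝ) T) :=
    fun t ht => (hderiv t ht).continuousWithinAt
  refine ⟨?_, hderiv, ?_⟩
  · have heq0 : EqOn (fun s => G 0 s * ψ s) (fun _ => (0:ℝ)) (Icc (0:ℝ) T) := by
      intro s hs
      simp only
      rw [hGts, min_eq_left hs.1]
      simp [hI_def]
    rw [setIntegral_congr_fun measurableSet_Icc heq0]
    simp
  · have heqf : (fun t => r1 t * (∫ s in Icc (0:ℝ) T, G t s * ψ s) + ∫ s in Icc t T, K t s * ψ s)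
        = fun t => r1 t * (∫ s in Icc (0:ℝ) T, G t s * ψ s) + xim t * H t := by
      funext t; rw [hKint t]
    rw [heqf]
    exact (hr1_cont.mul hF_cont).add (hxim_cont.mul hH_cont)
end
end

section
/- Let μ̄ ∈ L²([0,T]) and q₀ ∈ ℝ. Then ⟨R𝟙, 𝟙⟩_{L²} > 0, so the constant η := 2λ₀ (q₀ − ⟨R S μ̄, 𝟙⟩_{L²}) / ⟨R𝟙, 𝟙⟩_{L²} is well defined, where 𝟙 denotes the constant function 1 on [0,T]. The function ν* := (η/(2λ₀)) R𝟙 + R S μ̄ is continuous on [0,T], satisfies ∫₀^T ν*(t) dt = q₀, and satisfies the Fredholm equation ν*(t) + c (𝖦ν*)(t) = (Sμ̄)(t) + η/(2λ₀) for all t ∈ [0,T]. Moreover, for each fixed constant η′ ∈ ℝ, the equation ν + c𝖦ν = Sμ̄ + η′/(2λ₀) has the unique solution ν = (η′/(2λ₀)) R𝟙 + R S μ̄ in L²([0,T]), and η is the unique constant for which this solution has integral q₀. -/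
noncomputable section
open MeasureTheory Set Filter
open scoped RealInnerProductSpace ENNReal NNReal

lemma muT_def (T : ℝ) : muT T = MeasureTheory.volume.restrict (Set.Icc 0 T) := rfl

instance muT_finite (T : ℝ) : IsFiniteMeasure (muT T) := by
  constructor
  rw [muT_def, Measure.restrict_apply_univ, Real.volume_Icc]
  exact ENNReal.ofReal_lt_top

/-- bounded-continuousOn times integrable is integrable on `muT T` -/
lemma integrable_contOn_mul {T : ℝ} (g f : ℝ → ℝ)
    (hg : ContinuousOn g (Icc 0 T)) (hf : Integrable f (muT T)) :
    Integrable (fun s => g s * f s) (muT T) := by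
  obtain ⟨C, hC⟩ := isCompact_Icc.exists_bound_of_continuousOn hg
  refine Integrable.mono' (hf.norm.const_mul C)
    ((hg.aestronglyMeasurable measurableSet_Icc).mul hf.1) ?_
  rw [muT_def]
  filter_upwards [ae_restrict_mem measurableSet_Icc] with s hs
  calc ‖g s * f s‖ = ‖g s‖ * ‖f s‖ := norm_mul _ _
  _ ≤ C * ‖f s‖ := by
      exact mul_le_mul_of_nonneg_right (hC s hs) (norm_nonneg _)

/-- The key Fubini swap. -/
lemma swap_lemma {T : ℝ} (a b : ℝ → ℝ) (C : ℝ)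
    (ha : Integrable a (muT T)) (hb : AEStronglyMeasurable b (muT T))
    (hbC : ∀ᵐ u ∂(muT T), |b u| ≤ C) :
    ∫ s, a s * ∫ u, (if u ≤ s then b u else 0) ∂(muT T) ∂(muT T)
      = ∫ u, b u * ∫ s, (if u ≤ s then a s else 0) ∂(muT T) ∂(muT T) := by
  have hbint : Integrable b (muT T) := by
    refine Integrable.mono' (integrable_const C) hb ?_
    filter_upwards [hbC] with u hu using by simpa [Real.norm_eq_abs] using hu
  have hprod : Integrable (fun p : ℝ × ℝ => a p.1 * b p.2) ((muT T).prod (muT T)) :=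
    ha.mul_prod hbint
  have hS : MeasurableSet {p : ℝ × ℝ | p.2 ≤ p.1} :=
    measurableSet_le measurable_snd measurable_fst
  have hint : Integrable (Function.uncurry fun s u =>
      a s * (if u ≤ s then b u else 0)) ((muT T).prod (muT T)) := by
    have : (Function.uncurry fun s u => a s * (if u ≤ s then b u else 0))
        = fun p : ℝ × ℝ => (if p.2 ≤ p.1 then (1:ℝ) else 0) * (a p.1 * b p.2) := by
      funext p
      rcases p with ⟨s, u⟩
      simp only [Function.uncurry]
      by_cases h : u ≤ s <;> simp [h]
    rw [this]
    refine hprod.bdd_mul (c := 1) ?_ (Filter.Eventually.of_forall fun p => ?_)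
    · exact (measurable_one.indicator hS).aestronglyMeasurable.congr
        (Filter.Eventually.of_forall fun p => by
          by_cases h : p.2 ≤ p.1 <;> simp [Set.indicator_apply, h, Set.mem_setOf_eq])
    · by_cases h : p.2 ≤ p.1 <;> simp [h]
  simp_rw [← MeasureTheory.integral_const_mul]
  rw [MeasureTheory.integral_integral_swap hint]
  refine integral_congr_ae (Filter.Eventually.of_forall fun u => ?_)
  refine integral_congr_ae (Filter.Eventually.of_forall fun s => ?_)
  by_cases h : u ≤ s <;> simp [h, mul_comm]

lemma min_mem_Icc {T t s : ℝ} (ht : t ∈ Icc (0:ℝ) T) (hs : s ∈ Icc (0:ℝ) T) :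
    min t s ∈ Icc (0:ℝ) T :=
  ⟨le_min ht.1 hs.1, min_le_of_left_le ht.2⟩

lemma integrable_conv {T : ℝ} (h F : ℝ → ℝ) (hh : Integrable h (muT T))
    (hFc : ContinuousOn F (Icc 0 T)) {t : ℝ} (ht : t ∈ Icc (0:ℝ) T) :
    Integrable (fun s => h s * F (min t s)) (muT T) := by
  have : Integrable (fun s => F (min t s) * h s) (muT T) := by
    refine integrable_contOn_mul _ _ ?_ hh
    exact hFc.comp ((continuous_const.min continuous_id).continuousOn)
      (fun s hs => min_mem_Icc ht hs)
  simpa [mul_comm] using this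

lemma cont_conv {T : ℝ} (h F : ℝ → ℝ) (hh : Integrable h (muT T))
    (hFc : ContinuousOn F (Icc 0 T)) (C : ℝ) (hC0 : 0 ≤ C)
    (hF : ∀ a ∈ Icc (0:ℝ) T, ∀ b ∈ Icc (0:ℝ) T, |F a - F b| ≤ C * |a - b|) :
    ContinuousOn (fun t => ∫ s, h s * F (min t s) ∂(muT T)) (Icc (0:ℝ) T) := by
  set M := ∫ s, ‖h s‖ ∂(muT T) with hM
  have hM0 : 0 ≤ M := integral_nonneg fun s => norm_nonneg _
  refine (LipschitzOnWith.continuousOn (K := Real.toNNReal (C * M)) ?_)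
  rw [lipschitzOnWith_iff_dist_le_mul]
  intro t ht t' ht'
  rw [Real.dist_eq, Real.dist_eq]
  have hi : Integrable (fun s => h s * F (min t s)) (muT T) := integrable_conv h F hh hFc ht
  have hi' : Integrable (fun s => h s * F (min t' s)) (muT T) := integrable_conv h F hh hFc ht'
  have hsub : (∫ s, h s * F (min t s) ∂(muT T)) - ∫ s, h s * F (min t' s) ∂(muT T)
      = ∫ s, (h s * F (min t s) - h s * F (min t' s)) ∂(muT T) :=
    (integral_sub hi hi').symm
  rw [hsub]
  have hb : ∀ᵐ s ∂(muT T), ‖h s * F (min t s) - h s * F (min t' s)‖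
      ≤ (C * |t - t'|) * ‖h s‖ := by
    rw [muT_def]
    filter_upwards [ae_restrict_mem measurableSet_Icc] with s hs
    have h1 : |F (min t s) - F (min t' s)| ≤ C * |min t s - min t' s| :=
      hF _ (min_mem_Icc ht hs) _ (min_mem_Icc ht' hs)
    have h2 : |min t s - min t' s| ≤ |t - t'| := by
      have := abs_min_sub_min_le_max t s t' s
      simpa using this
    calc ‖h s * F (min t s) - h s * F (min t' s)‖
        = ‖h s‖ * |F (min t s) - F (min t' s)| := by
          rw [← mul_sub]; rw [norm_mul]; rfl
      _ ≤ ‖h s‖ * (C * |t - t'|) := by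
          refine mul_le_mul_of_nonneg_left (h1.trans ?_) (norm_nonneg _)
          exact mul_le_mul_of_nonneg_left h2 hC0
      _ = (C * |t - t'|) * ‖h s‖ := mul_comm _ _
  have := norm_integral_le_of_norm_le (hh.norm.const_mul (C * |t - t'|)) hb
  rw [integral_const_mul] at this
  calc |∫ s, (h s * F (min t s) - h s * F (min t' s)) ∂(muT T)|
      ≤ C * |t - t'| * M := this
    _ ≤ (Real.toNNReal (C * M)) * |t - t'| := by
        rw [Real.coe_toNNReal _ (mul_nonneg hC0 hM0)]
        nlinarith [abs_nonneg (t - t')]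

set_option maxHeartbeats 2000000 in
/-- With `R = (I + c𝖦)⁻¹`: one has `⟨R𝟙, 𝟙⟩ > 0`, so
`η = 2λ₀ (q₀ − ⟨RSμ̄, 𝟙⟩)/⟨R𝟙, 𝟙⟩` is well defined; the function
`ν* = (η/(2λ₀)) R𝟙 + RSμ̄` has a continuous version on `[0,T]` with integral `q₀`
satisfying the Fredholm equation `ν*(t) + c(𝖦ν*)(t) = (Sμ̄)(t) + η/(2λ₀)` for all
`t ∈ [0,T]`; for each constant `η′` the equation `ν + c𝖦ν = Sμ̄ + η′/(2λ₀)` has the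
unique solution `ν = (η′/(2λ₀)) R𝟙 + RSμ̄` in `L²([0,T])`; and `η` is the unique
constant for which this solution has integral `q₀`. -/
theorem major_agent_fredholm_solution
    (T lam1 kap1 alpha : ℝ)
    (hT : 0 < T) (hlam1 : 0 < lam1) (hkap1 : 0 < kap1) (halpha : 0 < alpha)
    (hak : kap1 ≤ 2 * alpha)
    (phi : ℝ → ℝ)
    (hphi_nonneg : ∀ t ∈ Icc (0:ℝ) T, 0 ≤ phi t)
    (hphi_bdd : ∃ C : ℝ, ∀ t ∈ Icc (0:ℝ) T, |phi t| ≤ C)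
    (hphi_pc : ∃ F : Set ℝ, F.Finite ∧ ContinuousOn phi (Icc (0:ℝ) T \ F))
    (r1 : ℝ → ℝ)
    (hr1_cont : ContinuousOn r1 (Icc (0:ℝ) T))
    (hr1_eq : ∀ t ∈ Icc (0:ℝ) T,
      r1 t = -((2*alpha - kap1)/(2*lam1)) + ∫ s in t..T, (r1 s ^ 2 - phi s / lam1))
    (xip xim : ℝ → ℝ)
    (hxip : ∀ t, xip t = Real.exp (∫ s in (0:ℝ)..t, r1 s))
    (hxim : ∀ t, xim t = Real.exp (-∫ s in (0:ℝ)..t, r1 s))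
    (K : ℝ → ℝ → ℝ) (hK : ∀ t s, K t s = xim t * xip s)
    (lam0 kap0 : ℝ) (hlam0 : 0 < lam0) (hkap0 : 0 < kap0)
    (G : ℝ → ℝ → ℝ) (hG : ∀ t s, G t s = ∫ u in (0:ℝ)..(min t s), K u t * K u s)
    (c : ℝ) (hc : c = kap1 * kap0 / (2 * lam0 * lam1))
    (Gop : HT T →L[ℝ] HT T)
    (hGop : ∀ ψ : HT T, (Gop ψ : ℝ → ℝ) =ᵐ[muT T]
      fun t => ∫ s in Icc (0:ℝ) T, G t s * ψ s)
    (Rop : HT T →L[ℝ] HT T)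
    (hRop_left : Rop ∘L (1 + c • Gop) = 1)
    (hRop_right : (1 + c • Gop) ∘L Rop = 1)
    (mu : ℝ → ℝ) (hmu : MeasureTheory.MemLp mu 2 (muT T))
    (q0 : ℝ)
    (Sfun : ℝ → ℝ)
    (hSfun : ∀ t, Sfun t = (1/(2*lam0)) * (∫ s in Icc (0:ℝ) t, mu s) +
      (kap1/(4*lam1*lam0)) * ∫ s in Icc (0:ℝ) T, G t s * mu s)
    (hSfun_mem : MeasureTheory.MemLp Sfun 2 (muT T))
    (oneH : HT T) (honeH : (oneH : ℝ → ℝ) =ᵐ[muT T] fun _ => (1:ℝ))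
    (SH : HT T) (hSH : (SH : ℝ → ℝ) =ᵐ[muT T] Sfun)
    :
    0 < ⟪Rop oneH, oneH⟫ ∧
    ∀ eta : ℝ, eta = 2 * lam0 * (q0 - ⟪Rop SH, oneH⟫) / ⟪Rop oneH, oneH⟫ →
      (∃ v : ℝ → ℝ, ContinuousOn v (Icc (0:ℝ) T) ∧
        (((eta/(2*lam0)) • Rop oneH + Rop SH : HT T) : ℝ → ℝ) =ᵐ[muT T] v ∧
        (∫ t in Icc (0:ℝ) T, v t) = q0 ∧
        (∀ t ∈ Icc (0:ℝ) T,
          v t + c * (∫ s in Icc (0:ℝ) T, G t s * v s) = Sfun t + eta/(2*lam0))) ∧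
      (∀ eta' : ℝ, ∀ w : HT T,
        w + c • Gop w = SH + (eta'/(2*lam0)) • oneH ↔
          w = (eta'/(2*lam0)) • Rop oneH + Rop SH) ∧
      (∀ eta' : ℝ,
        ⟪(eta'/(2*lam0)) • Rop oneH + Rop SH, oneH⟫ = q0 ↔ eta' = eta) := by
  classical
  have huIcc : uIcc (0:ℝ) T = Icc 0 T := uIcc_of_le hT.le
  have hmemae : ∀ᵐ t ∂(muT T), t ∈ Icc (0:ℝ) T := by
    rw [muT_def]; exact ae_restrict_mem measurableSet_Icc
  have hset : ∀ g : ℝ → ℝ, (∫ s in Icc (0:ℝ) T, g s) = ∫ s, g s ∂(muT T) :=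
    fun g => rfl
  -- continuity of xip, xim
  have hr1int : IntegrableOn r1 (Icc 0 T) volume := hr1_cont.integrableOn_Icc
  have hJc : ContinuousOn (fun t => ∫ s in (0:ℝ)..t, r1 s) (Icc 0 T) := by
    have := intervalIntegral.continuousOn_primitive_interval
      (a := 0) (b := T) (μ := volume) (f := r1) (by rwa [huIcc])
    rwa [huIcc] at this
  have hxipc : ContinuousOn xip (Icc 0 T) :=
    (Real.continuous_exp.comp_continuousOn hJc).congr fun t _ => hxip t
  have hximc : ContinuousOn xim (Icc 0 T) :=
    (Real.continuous_exp.comp_continuousOn hJc.neg).congr fun t _ => hxim t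
  have hwc : ContinuousOn (fun u => xim u ^ 2) (Icc 0 T) := hximc.pow 2
  -- bounds
  obtain ⟨Cw0, hCw0⟩ := isCompact_Icc.exists_bound_of_continuousOn hwc
  set Cw : ℝ := max Cw0 0 with hCwdef
  have hCw : ∀ u ∈ Icc (0:ℝ) T, |xim u ^ 2| ≤ Cw :=
    fun u hu => le_trans (hCw0 u hu) (le_max_left _ _)
  have hCwpos : 0 ≤ Cw := le_max_right _ _
  obtain ⟨Cp0, hCp0⟩ := isCompact_Icc.exists_bound_of_continuousOn hxipc
  set Cp : ℝ := max Cp0 0 with hCpdef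
  have hCp : ∀ u ∈ Icc (0:ℝ) T, |xip u| ≤ Cp :=
    fun u hu => le_trans (hCp0 u hu) (le_max_left _ _)
  have hCppos : 0 ≤ Cp := le_max_right _ _
  -- F
  set F : ℝ → ℝ := fun m => ∫ u in (0:ℝ)..m, xim u ^ 2 with hFdef
  have hwint : IntegrableOn (fun u => xim u ^ 2) (Icc 0 T) volume := hwc.integrableOn_Icc
  have hFc : ContinuousOn F (Icc 0 T) := by
    have := intervalIntegral.continuousOn_primitive_interval
      (a := 0) (b := T) (μ := volume) (f := fun u => xim u ^ 2) (by rwa [huIcc])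
    rwa [huIcc] at this
  have hii : ∀ a ∈ Icc (0:ℝ) T, IntervalIntegrable (fun u => xim u ^ 2) volume 0 a := by
    intro a ha
    refine IntegrableOn.intervalIntegrable ?_
    refine hwint.mono_set ?_
    rw [uIcc_of_le ha.1]
    exact Icc_subset_Icc le_rfl ha.2
  have hFlip : ∀ a ∈ Icc (0:ℝ) T, ∀ b ∈ Icc (0:ℝ) T, |F a - F b| ≤ Cw * |a - b| := by
    intro a ha b hb
    have hsub : F a - F b = ∫ u in b..a, xim u ^ 2 :=
      intervalIntegral.integral_interval_sub_left (hii a ha) (hii b hb)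
    rw [hsub]
    calc |∫ u in b..a, xim u ^ 2| = ‖∫ u in b..a, xim u ^ 2‖ := (Real.norm_eq_abs _).symm
    _ ≤ Cw * |a - b| := by
        refine intervalIntegral.norm_integral_le_of_norm_le_const fun x hx => ?_
        rw [Real.norm_eq_abs]
        refine hCw x ?_
        rcases le_total b a with h | h
        · rw [uIoc_of_le h] at hx
          exact ⟨le_trans hb.1 (le_of_lt hx.1), le_trans hx.2 ha.2⟩
        · rw [uIoc_of_ge h] at hx
          exact ⟨le_trans ha.1 (le_of_lt hx.1), le_trans hx.2 hb.2⟩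
  -- structure of G
  have hGeq : ∀ t s, G t s = xip t * xip s * F (min t s) := by
    intro t s
    rw [hG]
    have : ∀ u, K u t * K u s = xip t * xip s * xim u ^ 2 := fun u => by
      rw [hK, hK]; ring
    simp only [this]
    rw [intervalIntegral.integral_const_mul]
  have hFind : ∀ m ∈ Icc (0:ℝ) T, F m = ∫ u, (if u ≤ m then xim u ^ 2 else 0) ∂(muT T) := by
    intro m hm
    have hFm : F m = ∫ u in Ioc (0:ℝ) m, xim u ^ 2 := intervalIntegral.integral_of_le hm.1
    have h1 : ∀ u, (if u ≤ m then xim u ^ 2 else 0)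
        = (Iic m).indicator (fun u => xim u ^ 2) u := by
      intro u
      by_cases h : u ≤ m <;> simp [Set.indicator_apply, Set.mem_Iic, h]
    have h2 : Icc (0:ℝ) T ∩ Iic m = Icc 0 m := by
      ext x
      simp only [Set.mem_inter_iff, Set.mem_Icc, Set.mem_Iic]
      constructor
      · rintro ⟨⟨hx0, _⟩, hxm⟩; exact ⟨hx0, hxm⟩
      · rintro ⟨hx0, hxm⟩; exact ⟨⟨hx0, le_trans hxm hm.2⟩, hxm⟩
    calc F m = ∫ u in Ioc (0:ℝ) m, xim u ^ 2 := hFm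
      _ = ∫ u in Icc (0:ℝ) m, xim u ^ 2 := (MeasureTheory.integral_Icc_eq_integral_Ioc).symm
      _ = ∫ u in Icc (0:ℝ) T ∩ Iic m, xim u ^ 2 := by rw [h2]
      _ = ∫ u in Icc (0:ℝ) T, (Iic m).indicator (fun u => xim u ^ 2) u :=
          (setIntegral_indicator measurableSet_Iic).symm
      _ = ∫ u, (Iic m).indicator (fun u => xim u ^ 2) u ∂(muT T) := hset _
      _ = ∫ u, (if u ≤ m then xim u ^ 2 else 0) ∂(muT T) :=
          integral_congr_ae (Filter.Eventually.of_forall fun u => (h1 u).symm)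
  -- integrability of L² functions
  have hL2int : ∀ ψ : HT T, Integrable (ψ : ℝ → ℝ) (muT T) :=
    fun ψ => (Lp.memLp ψ).integrable (by norm_num)
  -- continuity of the G-convolution
  have hGconv_cont : ∀ f : ℝ → ℝ, Integrable f (muT T) →
      ContinuousOn (fun t => ∫ s, G t s * f s ∂(muT T)) (Icc 0 T) := by
    intro f hf
    have hh : Integrable (fun s => xip s * f s) (muT T) := integrable_contOn_mul _ _ hxipc hf
    have h1 := cont_conv (T := T) (fun s => xip s * f s) F hh hFc Cw hCwpos hFlip
    refine (hxipc.mul h1).congr fun t ht => ?_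
    rw [Pi.mul_apply, ← MeasureTheory.integral_const_mul]
    refine integral_congr_ae (Filter.Eventually.of_forall fun s => ?_)
    show G t s * f s = xip t * ((xip s * f s) * F (min t s))
    rw [hGeq t s]; ring
  -- positivity of Gop
  have hGpsd : ∀ ψ : HT T, 0 ≤ ⟪ψ, Gop ψ⟫ := by
    intro ψ
    set f : ℝ → ℝ := (ψ : ℝ → ℝ) with hfdef
    have hfint : Integrable f (muT T) := hL2int ψ
    set h : ℝ → ℝ := fun s => xip s * f s with hhdef
    have hhint : Integrable h (muT T) := integrable_contOn_mul _ _ hxipc hfint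
    set I : ℝ → ℝ := fun u => ∫ s, (if u ≤ s then h s else 0) ∂(muT T) with hIdef
    set M : ℝ := ∫ s, ‖h s‖ ∂(muT T) with hMdef
    have hM0 : 0 ≤ M := integral_nonneg fun s => norm_nonneg _
    have hIbd : ∀ u, |I u| ≤ M := by
      intro u
      have hb : ‖∫ s, (if u ≤ s then h s else 0) ∂(muT T)‖ ≤ ∫ s, ‖h s‖ ∂(muT T) :=
        norm_integral_le_of_norm_le hhint.norm
          (Filter.Eventually.of_forall fun s => by by_cases hus : u ≤ s <;> simp [hus])
      exact hb
    have hIint : ∀ u ∈ Icc (0:ℝ) T, I u = ∫ s in u..T, h s := by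
      intro u hu
      have h1 : ∀ s, (if u ≤ s then h s else 0) = (Ici u).indicator h s := by
        intro s; by_cases hx : u ≤ s <;> simp [Set.indicator_apply, Set.mem_Ici, hx]
      have h2 : Icc (0:ℝ) T ∩ Ici u = Icc u T := by
        ext x; simp only [Set.mem_inter_iff, Set.mem_Icc, Set.mem_Ici]
        constructor
        · rintro ⟨⟨_, hxT⟩, hux⟩; exact ⟨hux, hxT⟩
        · rintro ⟨hux, hxT⟩; exact ⟨⟨le_trans hu.1 hux, hxT⟩, hux⟩
      calc I u = ∫ s, (if u ≤ s then h s else 0) ∂(muT T) := rfl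
        _ = ∫ s, (Ici u).indicator h s ∂(muT T) :=
            integral_congr_ae (Filter.Eventually.of_forall fun s => h1 s)
        _ = ∫ s in Icc (0:ℝ) T, (Ici u).indicator h s := (hset _).symm
        _ = ∫ s in Icc (0:ℝ) T ∩ Ici u, h s := setIntegral_indicator measurableSet_Ici
        _ = ∫ s in Icc u T, h s := by rw [h2]
        _ = ∫ s in Ioc u T, h s := MeasureTheory.integral_Icc_eq_integral_Ioc
        _ = ∫ s in u..T, h s := (intervalIntegral.integral_of_le hu.2).symm
    have hIc : ContinuousOn I (Icc 0 T) := by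
      have h0 : IntegrableOn h (uIcc 0 T) volume := by rw [huIcc]; exact hhint
      have h1 := intervalIntegral.continuousOn_primitive_interval_left h0
      rw [huIcc] at h1
      exact h1.congr fun u hu => hIint u hu
    have hImeas : AEStronglyMeasurable I (muT T) := by
      rw [muT_def]; exact hIc.aestronglyMeasurable measurableSet_Icc
    -- inner product as integral
    have hQ1 : ⟪ψ, Gop ψ⟫ = ∫ t, f t * ((Gop ψ : ℝ → ℝ) t) ∂(muT T) := by
      rw [MeasureTheory.L2.inner_def]
      exact integral_congr_ae (Filter.Eventually.of_forall fun t => by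
        simp [RCLike.inner_apply, mul_comm, hfdef])
    -- key step
    have step1 : ∀ t ∈ Icc (0:ℝ) T, (∫ s, G t s * f s ∂(muT T))
        = ∫ u, (if u ≤ t then (xip t * xim u ^ 2) * I u else 0) ∂(muT T) := by
      intro t ht
      have e1 : ∫ s, G t s * f s ∂(muT T)
          = ∫ s, h s * (∫ u, (if u ≤ s then (if u ≤ t then xip t * xim u ^ 2 else 0)
              else 0) ∂(muT T)) ∂(muT T) := by
        refine integral_congr_ae ?_
        filter_upwards [hmemae] with s hs
        have e2 : (∫ u, (if u ≤ s then (if u ≤ t then xip t * xim u ^ 2 else 0)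
            else 0) ∂(muT T)) = xip t * F (min t s) := by
          have e3 : ∀ u, (if u ≤ s then (if u ≤ t then xip t * xim u ^ 2 else 0) else 0)
              = xip t * (if u ≤ min t s then xim u ^ 2 else 0) := by
            intro u
            by_cases h1 : u ≤ s <;> by_cases h2 : u ≤ t <;>
              simp [h1, h2, le_min_iff]
          simp only [e3]
          rw [MeasureTheory.integral_const_mul, ← hFind (min t s) (min_mem_Icc ht hs)]
        rw [e2, hGeq t s]
        ring
      rw [e1]
      have hb : AEStronglyMeasurable (fun u => if u ≤ t then xip t * xim u ^ 2 else 0)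
          (muT T) := by
        have h1 : (fun u => if u ≤ t then xip t * xim u ^ 2 else 0)
            = (Iic t).indicator (fun u => xip t * xim u ^ 2) := by
          funext u; by_cases hx : u ≤ t <;> simp [Set.indicator_apply, Set.mem_Iic, hx]
        rw [h1, muT_def]
        exact ((continuousOn_const.mul hwc).aestronglyMeasurable
          measurableSet_Icc).indicator measurableSet_Iic
      have hbC : ∀ᵐ u ∂(muT T), |if u ≤ t then xip t * xim u ^ 2 else 0| ≤ Cp * Cw := by
        filter_upwards [hmemae] with u hu
        by_cases hx : u ≤ t
        · simp only [hx, if_true, abs_mul]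
          exact mul_le_mul (hCp t ht) (hCw u hu) (abs_nonneg _) hCppos
        · simp [hx]
          positivity
      have := swap_lemma h (fun u => if u ≤ t then xip t * xim u ^ 2 else 0)
        (Cp * Cw) hhint hb hbC
      rw [this]
      refine integral_congr_ae (Filter.Eventually.of_forall fun u => ?_)
      by_cases hx : u ≤ t <;> simp [hx, hIdef]
    have hQ2 : ⟪ψ, Gop ψ⟫
        = ∫ t, h t * (∫ u, (if u ≤ t then xim u ^ 2 * I u else 0) ∂(muT T)) ∂(muT T) := by
      rw [hQ1]
      refine integral_congr_ae ?_
      filter_upwards [hGop ψ, hmemae] with t hGt ht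
      rw [hGt]
      rw [hset, step1 t ht]
      have e4 : ∀ u, (if u ≤ t then (xip t * xim u ^ 2) * I u else 0)
          = xip t * (if u ≤ t then xim u ^ 2 * I u else 0) := by
        intro u; by_cases hx : u ≤ t <;> simp [hx] ; ring
      simp only [e4]
      rw [MeasureTheory.integral_const_mul, hhdef]
      ring
    have hb2 : AEStronglyMeasurable (fun u => xim u ^ 2 * I u) (muT T) := by
      refine AEStronglyMeasurable.mul ?_ hImeas
      rw [muT_def]; exact hwc.aestronglyMeasurable measurableSet_Icc
    have hb2C : ∀ᵐ u ∂(muT T), |xim u ^ 2 * I u| ≤ Cw * M := by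
      filter_upwards [hmemae] with u hu
      rw [abs_mul]
      exact mul_le_mul (hCw u hu) (hIbd u) (abs_nonneg _) hCwpos
    have hQ3 : ⟪ψ, Gop ψ⟫ = ∫ u, (xim u ^ 2 * I u) * I u ∂(muT T) := by
      rw [hQ2, swap_lemma h (fun u => xim u ^ 2 * I u) (Cw * M) hhint hb2 hb2C]
    rw [hQ3]
    refine integral_nonneg fun u => ?_
    have : (xim u ^ 2 * I u) * I u = xim u ^ 2 * (I u * I u) := by ring
    rw [this]
    exact mul_nonneg (sq_nonneg _) (mul_self_nonneg _)
  -- operator algebra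
  have hexp : ∀ x : HT T, (1 + c • Gop) x = x + c • Gop x := fun x => by
    simp [ContinuousLinearMap.add_apply, ContinuousLinearMap.smul_apply,
      ContinuousLinearMap.one_apply]
  have hRright : ∀ x : HT T, Rop x + c • Gop (Rop x) = x := by
    intro x
    have := ContinuousLinearMap.ext_iff.mp hRop_right x
    rw [ContinuousLinearMap.comp_apply, hexp] at this
    simpa using this
  have hRleft : ∀ x : HT T, Rop (x + c • Gop x) = x := by
    intro x
    have := ContinuousLinearMap.ext_iff.mp hRop_left x
    rw [ContinuousLinearMap.comp_apply, hexp] at this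
    simpa using this
  -- oneH ≠ 0
  have hone_ne : oneH ≠ 0 := by
    intro h0
    have h1 : (fun _ : ℝ => (1:ℝ)) =ᵐ[muT T] (0 : ℝ → ℝ) := by
      refine honeH.symm.trans ?_
      rw [h0]
      exact Lp.coeFn_zero ℝ 2 (muT T)
    have h2 : (muT T) {x | ¬ ((fun _ : ℝ => (1:ℝ)) x = (0 : ℝ → ℝ) x)} = 0 := h1
    simp only [Pi.zero_apply, one_ne_zero, not_false_iff, Set.setOf_true] at h2
    have h3 : (muT T) Set.univ = ENNReal.ofReal T := by
      rw [muT_def, Measure.restrict_apply_univ, Real.volume_Icc, sub_zero]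
    rw [h3] at h2
    exact absurd h2 (ne_of_gt (ENNReal.ofReal_pos.mpr hT))
  have hcpos : 0 < c := by rw [hc]; positivity
  -- Part A
  have hApos : 0 < ⟪Rop oneH, oneH⟫ := by
    have hone' : oneH = Rop oneH + c • Gop (Rop oneH) := (hRright oneH).symm
    have h1 : ⟪Rop oneH, oneH⟫
        = ⟪Rop oneH, Rop oneH⟫ + c * ⟪Rop oneH, Gop (Rop oneH)⟫ := by
      nth_rewrite 2 [hone']
      rw [inner_add_right, real_inner_smul_right]
    have h3 : Rop oneH ≠ 0 := by
      intro h0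
      apply hone_ne
      rw [← hRright oneH, h0]
      simp
    have h4 : 0 < ⟪Rop oneH, Rop oneH⟫ := by
      rcases (real_inner_self_nonneg (x := Rop oneH)).lt_or_eq with hlt | heq
      · exact hlt
      · exact absurd (inner_self_eq_zero.mp heq.symm) h3
    have h5 := hGpsd (Rop oneH)
    have h6 : 0 ≤ c * ⟪Rop oneH, Gop (Rop oneH)⟫ := mul_nonneg hcpos.le h5
    rw [h1]
    linarith
  refine ⟨hApos, ?_⟩
  intro eta heta
  set ip : ℝ := ⟪Rop oneH, oneH⟫ with hipdef
  set sh : ℝ := ⟪Rop SH, oneH⟫ with hshdef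
  have hipne : ip ≠ 0 := ne_of_gt hApos
  have hinner_lin : ∀ k : ℝ, ⟪k • Rop oneH + Rop SH, oneH⟫ = k * ip + sh := fun k => by
    rw [inner_add_left, real_inner_smul_left]
  -- Part C
  have hC : ∀ eta' : ℝ, ∀ w : HT T,
      w + c • Gop w = SH + (eta'/(2*lam0)) • oneH ↔
        w = (eta'/(2*lam0)) • Rop oneH + Rop SH := by
    intro k w
    constructor
    · intro hw
      have h1 := hRleft w
      rw [hw, map_add, _root_.map_smul] at h1
      rw [← h1, add_comm]
    · intro hw
      have h1 : (k/(2*lam0)) • Rop oneH + Rop SH = Rop (SH + (k/(2*lam0)) • oneH) := by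
        rw [map_add, _root_.map_smul, add_comm]
      rw [hw, h1]
      exact hRright _
  -- the L² solution
  set nu : HT T := (eta/(2*lam0)) • Rop oneH + Rop SH with hnudef
  have hnufred : nu + c • Gop nu = SH + (eta/(2*lam0)) • oneH := (hC eta nu).mpr rfl
  have hnuint : Integrable (nu : ℝ → ℝ) (muT T) := hL2int nu
  set v : ℝ → ℝ := fun t => Sfun t + eta/(2*lam0) - c * ∫ s, G t s * (nu : ℝ → ℝ) s ∂(muT T)
    with hvdef
  have hptws : ∀ᵐ t ∂(muT T),
      (nu : ℝ → ℝ) t + c * ((Gop nu : ℝ → ℝ) t) = Sfun t + eta/(2*lam0) := by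
    have e1 : ((nu + c • Gop nu : HT T) : ℝ → ℝ)
        =ᵐ[muT T] fun t => (nu : ℝ → ℝ) t + c * ((Gop nu : ℝ → ℝ) t) := by
      filter_upwards [Lp.coeFn_add nu (c • Gop nu), Lp.coeFn_smul c (Gop nu)] with t h1 h2
      rw [h1]
      simp only [Pi.add_apply]
      rw [h2]
      simp [smul_eq_mul]
    have e2 : ((SH + (eta/(2*lam0)) • oneH : HT T) : ℝ → ℝ)
        =ᵐ[muT T] fun t => Sfun t + eta/(2*lam0) := by
      filter_upwards [Lp.coeFn_add SH ((eta/(2*lam0)) • oneH),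
        Lp.coeFn_smul (eta/(2*lam0)) oneH, hSH, honeH] with t h1 h2 h3 h4
      rw [h1]
      simp only [Pi.add_apply]
      rw [h2, h3]
      simp only [Pi.smul_apply, h4, smul_eq_mul, mul_one]
    have e3 : ((nu + c • Gop nu : HT T) : ℝ → ℝ)
        =ᵐ[muT T] ((SH + (eta/(2*lam0)) • oneH : HT T) : ℝ → ℝ) := by
      rw [hnufred]
    filter_upwards [e1.symm.trans (e3.trans e2)] with t ht
    exact ht
  have hv_apply : ∀ t, v t
      = Sfun t + eta/(2*lam0) - c * ∫ s, G t s * (nu : ℝ → ℝ) s ∂(muT T) := fun t => rfl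
  have hvae : (nu : ℝ → ℝ) =ᵐ[muT T] v := by
    filter_upwards [hptws, hGop nu] with t h1 h2
    rw [hv_apply t, ← hset, ← h2]
    linarith [h1]
  -- continuity of v
  have hmuint : Integrable mu (muT T) := hmu.integrable (by norm_num)
  have hmuon : IntegrableOn mu (Icc 0 T) volume := hmuint
  have hSfunc : ContinuousOn Sfun (Icc 0 T) := by
    have h1 : ContinuousOn (fun t => ∫ s in Icc (0:ℝ) t, mu s) (Icc 0 T) :=
      intervalIntegral.continuousOn_primitive_Icc hmuon
    have h2 : ContinuousOn (fun t => ∫ s, G t s * mu s ∂(muT T)) (Icc 0 T) :=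
      hGconv_cont mu hmuint
    have h3 : ContinuousOn (fun t => (1/(2*lam0)) * (∫ s in Icc (0:ℝ) t, mu s) +
        (kap1/(4*lam1*lam0)) * ∫ s, G t s * mu s ∂(muT T)) (Icc 0 T) :=
      (continuousOn_const.mul h1).add (continuousOn_const.mul h2)
    refine h3.congr fun t _ => ?_
    rw [hSfun t, hset]
  have hvc : ContinuousOn v (Icc 0 T) := by
    have h2 : ContinuousOn (fun t => ∫ s, G t s * (nu : ℝ → ℝ) s ∂(muT T)) (Icc 0 T) :=
      hGconv_cont _ hnuint
    exact (hSfunc.add continuousOn_const).sub (continuousOn_const.mul h2)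
  -- the integral of v
  have hinner_nu : ∫ t, (nu : ℝ → ℝ) t ∂(muT T) = ⟪nu, oneH⟫ := by
    rw [MeasureTheory.L2.inner_def]
    refine integral_congr_ae ?_
    filter_upwards [honeH] with t ht
    have ht' : (oneH : ℝ → ℝ) t = 1 := ht
    simp only [RCLike.inner_apply, conj_trivial, ht', mul_one, one_mul]
  have hq : (∫ t in Icc (0:ℝ) T, v t) = q0 := by
    rw [hset]
    rw [integral_congr_ae hvae.symm, hinner_nu, hnudef, hinner_lin]
    rw [heta]
    field_simp
    ring
  -- pointwise Fredholm equation
  have hpt : ∀ t ∈ Icc (0:ℝ) T,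
      v t + c * (∫ s in Icc (0:ℝ) T, G t s * v s) = Sfun t + eta/(2*lam0) := by
    intro t ht
    have hGv : (∫ s in Icc (0:ℝ) T, G t s * v s) = ∫ s, G t s * (nu : ℝ → ℝ) s ∂(muT T) := by
      rw [hset]
      refine integral_congr_ae ?_
      filter_upwards [hvae] with s hs
      rw [hs]
    rw [hGv, hv_apply t]
    ring
  -- Part D
  have hD : ∀ eta' : ℝ,
      ⟪(eta'/(2*lam0)) • Rop oneH + Rop SH, oneH⟫ = q0 ↔ eta' = eta := by
    intro eta'
    rw [hinner_lin]
    rw [heta]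
    have h2lam0 : (2*lam0) ≠ 0 := by positivity
    constructor
    · intro hh
      field_simp at hh ⊢
      nlinarith [hh]
    · intro hh
      rw [hh]
      field_simp
      ring
  exact ⟨⟨v, hvc, hvae, hq, hpt⟩, hC, hD⟩
end
end
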